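/- arXiv:math/0607097 — 3 statements merged into one kernel-verified Lean document; each statement's English description precedes it below -/
import Mathlib

section
/- Let E be a real inner product space, let η₁ > 0 and λ > 0, let u, v ∈ E, and let a ∈ ℝ satisfy η₁‖u‖² ≤ a². Set μ₁ = √(4η₁ + λ²) (so μ₁ > λ). Then ((μ₁ − λ)/(μ₁ + λ))·(a² + ‖v‖²) ≤ a² + ‖v + λ·u‖² ≤ ((μ₁ + λ)/(μ₁ − λ))·(a² + ‖v‖²). -/
/-!
By the triangle inequality and Young's inequality, `b² + ‖x + y‖² ≤ K (b² + ‖x‖²)` as soon as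
`K ‖y‖² ≤ (K - 1)² b²`. For `K = (μ₁ + λ)/(μ₁ - λ)` one has `K λ² = (K - 1)² η₁`, so the
hypothesis `η₁ ‖u‖² ≤ a²` gives the upper bound with `y = λ u`. Applying the same bound to
`x = v + λ u`, `y = -λ u` gives the lower bound, with constant `K⁻¹ = (μ₁ - λ)/(μ₁ + λ)`.
-/

theorem sq_add_norm_add_sq_le {E : Type*} [SeminormedAddCommGroup E] {K b : ℝ} (x y : E)
    (hK : 1 < K) (hy : K * ‖y‖ ^ 2 ≤ (K - 1) ^ 2 * b ^ 2) :
    b ^ 2 + ‖x + y‖ ^ 2 ≤ K * (b ^ 2 + ‖x‖ ^ 2) := by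
  have htri : ‖x + y‖ ^ 2 ≤ (‖x‖ + ‖y‖) ^ 2 := by gcongr; exact norm_add_le x y
  -- multiplied by `K - 1`, the gap is at least `((K - 1) ‖x‖ - ‖y‖)²`
  have hgap : 0 ≤ (K - 1) * (K * (b ^ 2 + ‖x‖ ^ 2) - b ^ 2 - (‖x‖ + ‖y‖) ^ 2) := by
    nlinarith [sq_nonneg ((K - 1) * ‖x‖ - ‖y‖)]
  have hpos : 0 ≤ K * (b ^ 2 + ‖x‖ ^ 2) - b ^ 2 - (‖x‖ + ‖y‖) ^ 2 :=
    (mul_nonneg_iff_of_pos_left (sub_pos.mpr hK)).mp hgap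
  linarith

/-- Lemma 3.3 (equivalence of the energy and pseudo energy functions), abstract form. -/
theorem pseudo_energy_equivalence
    {E : Type*} [NormedAddCommGroup E] [InnerProductSpace ℝ E]
    (η₁ lam : ℝ) (hη : 0 < η₁) (hlam : 0 < lam)
    (u v : E) (a : ℝ) (ha : η₁ * ‖u‖ ^ 2 ≤ a ^ 2)
    (μ₁ : ℝ) (hμ : μ₁ = Real.sqrt (4 * η₁ + lam ^ 2)) :
    ((μ₁ - lam) / (μ₁ + lam)) * (a ^ 2 + ‖v‖ ^ 2) ≤ a ^ 2 + ‖v + lam • u‖ ^ 2 ∧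
      a ^ 2 + ‖v + lam • u‖ ^ 2 ≤ ((μ₁ + lam) / (μ₁ - lam)) * (a ^ 2 + ‖v‖ ^ 2) := by
  have hμsq : μ₁ ^ 2 = 4 * η₁ + lam ^ 2 := hμ ▸ Real.sq_sqrt (by positivity)
  have hlt : lam < μ₁ := hμ ▸ Real.lt_sqrt_of_sq_lt (by linarith)
  set K := (μ₁ + lam) / (μ₁ - lam) with hK_def
  have hK : 1 < K := (one_lt_div (by linarith)).mpr (by linarith)
  have hKη : K * lam ^ 2 = (K - 1) ^ 2 * η₁ := by
    have hne : μ₁ - lam ≠ 0 := by linarith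
    rw [hK_def, div_sub_one hne]
    field_simp
    linear_combination lam ^ 2 * hμsq
  have hu : K * ‖lam • u‖ ^ 2 ≤ (K - 1) ^ 2 * a ^ 2 := by
    rw [norm_smul, Real.norm_of_nonneg hlam.le, mul_pow, ← mul_assoc, hKη, mul_assoc]
    gcongr
  refine ⟨?_, sq_add_norm_add_sq_le v _ hK hu⟩
  rw [← inv_div, inv_mul_le_iff₀ (by linarith)]
  simpa using sq_add_norm_add_sq_le (v + lam • u) (-(lam • u)) hK (by rwa [norm_neg])
end

section
/- Let E be a real inner product space, let α, λ, η₁ > 0 with λ ≤ min(α/2, η₁/(4α)), let u, w, f ∈ E, and let a ∈ ℝ satisfy η₁‖u‖² ≤ a². Then λ(2α − λ)⟨u, w⟩ − λa² − (2α − λ)‖w‖² + ⟨f, w⟩ ≤ −(λ/2)(a² + ‖w‖²) + (1/λ)‖f‖². -/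
/-!
Both inner products are split by Young's inequality. The cross term `⟪u, w⟫` costs
`(α/2)‖w‖²` plus a multiple of `‖u‖²` which, because `λ(2α - λ)² ≤ 4α²λ ≤ αη₁`, is at most
`(λ/2)η₁‖u‖² ≤ (λ/2)a²`; the forcing term `⟪f, w⟫` costs `(λ/4)‖w‖² + ‖f‖²/λ`. What is left
of `-(2α - λ)‖w‖²` still dominates `-(λ/2)‖w‖²` since `λ ≤ α/2`.
-/

open scoped InnerProductSpace

theorem real_inner_le_mul_norm_sq_add_norm_sq_div {E : Type*} [NormedAddCommGroup E]
    [InnerProductSpace ℝ E] (x y : E) {ε : ℝ} (hε : 0 < ε) :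
    ⟪x, y⟫_ℝ ≤ ε * ‖x‖ ^ 2 + ‖y‖ ^ 2 / (4 * ε) := by
  have young : ‖x‖ * ‖y‖ ≤ ε * ‖x‖ ^ 2 + ‖y‖ ^ 2 / (4 * ε) := by
    have h : 0 ≤ (2 * ε * ‖x‖ - ‖y‖) ^ 2 / (4 * ε) := by positivity
    calc ‖x‖ * ‖y‖ = ε * ‖x‖ ^ 2 + ‖y‖ ^ 2 / (4 * ε) - (2 * ε * ‖x‖ - ‖y‖) ^ 2 / (4 * ε) := by
          field_simp; ring
      _ ≤ _ := by linarith
  exact (real_inner_le_norm x y).trans young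

theorem dissipativity_estimate_general
    {E : Type*} [NormedAddCommGroup E] [InnerProductSpace ℝ E]
    (α lam η₁ : ℝ) (hlam : 0 < lam)
    (hlam_le : lam ≤ min (α / 2) (η₁ / (4 * α)))
    (u w f : E) (a : ℝ) (ha : η₁ * ‖u‖ ^ 2 ≤ a ^ 2) :
    lam * (2 * α - lam) * (inner ℝ u w : ℝ) - lam * a ^ 2 - (2 * α - lam) * ‖w‖ ^ 2
        + (inner ℝ f w : ℝ)
      ≤ -(lam / 2) * (a ^ 2 + ‖w‖ ^ 2) + (1 / lam) * ‖f‖ ^ 2 := by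
  obtain ⟨hlam_α, hlam_η⟩ := le_min_iff.mp hlam_le
  have hα : 0 < α := by linarith
  set c := 2 * α - lam
  have hc : 0 ≤ c := by linarith
  have hcoef : lam * c ^ 2 ≤ η₁ * α := by
    have := (le_div_iff₀ (by positivity)).mp hlam_η
    nlinarith [mul_le_mul_of_nonneg_left (pow_le_pow_left₀ hc (by linarith : c ≤ 2 * α) 2) hlam.le]
  have hu : lam * c * ⟪u, w⟫_ℝ ≤ (lam * c) ^ 2 / (2 * α) * ‖u‖ ^ 2 + α / 2 * ‖w‖ ^ 2 := by
    have := real_inner_le_mul_norm_sq_add_norm_sq_div ((lam * c) • u) w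
      (by positivity : 0 < 1 / (2 * α))
    rw [real_inner_smul_left, norm_smul, mul_pow, Real.norm_eq_abs, sq_abs] at this
    convert this using 2
    · field_simp
    · field_simp; ring
  have hf : ⟪f, w⟫_ℝ ≤ 1 / lam * ‖f‖ ^ 2 + lam / 4 * ‖w‖ ^ 2 := by
    convert real_inner_le_mul_norm_sq_add_norm_sq_div f w (one_div_pos.mpr hlam) using 2
    field_simp
  have hu_a : (lam * c) ^ 2 / (2 * α) * ‖u‖ ^ 2 ≤ lam / 2 * a ^ 2 := by
    have hη : (lam * c) ^ 2 / (2 * α) ≤ lam / 2 * η₁ := by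
      rw [div_le_iff₀ (by positivity)]; nlinarith
    calc (lam * c) ^ 2 / (2 * α) * ‖u‖ ^ 2 ≤ lam / 2 * η₁ * ‖u‖ ^ 2 := by gcongr
      _ ≤ lam / 2 * a ^ 2 := by rw [mul_assoc]; gcongr
  nlinarith [mul_le_mul_of_nonneg_right hlam_α (sq_nonneg ‖w‖)]

/-- Inequality (3.25): the key dissipativity estimate in the proof of Lemma 3.2,
stated abstractly with `a` playing the role of `‖u‖₁` and `w` the role of `v + λu`. -/
theorem dissipativity_estimate
    {E : Type*} [NormedAddCommGroup E] [InnerProductSpace ℝ E]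
    (α lam η₁ : ℝ) (hα : 0 < α) (hlam : 0 < lam) (hη : 0 < η₁)
    (hlam_le : lam ≤ min (α / 2) (η₁ / (4 * α)))
    (u w f : E) (a : ℝ) (ha : η₁ * ‖u‖ ^ 2 ≤ a ^ 2) :
    lam * (2 * α - lam) * (inner ℝ u w : ℝ) - lam * a ^ 2 - (2 * α - lam) * ‖w‖ ^ 2
        + (inner ℝ f w : ℝ)
      ≤ -(lam / 2) * (a ^ 2 + ‖w‖ ^ 2) + (1 / lam) * ‖f‖ ^ 2 :=
  dissipativity_estimate_general α lam η₁ hlam hlam_le u w f a ha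
end

section
/- Let E be a real inner product space and let B : E → E be a continuous linear map that is symmetric (⟨Bx, y⟩ = ⟨x, By⟩ for all x, y) and satisfies η₁‖x‖² ≤ ‖Bx‖² for all x ∈ E, where η₁ > 0. Let α > 0 and let 0 < λ ≤ min(α/2, η₁/(4α)). Let f : ℝ → E be continuous and let u, v : ℝ → E be such that for every t ≥ 0, u has derivative v(t) at t and v has derivative −B(B(u(t))) − 2α·v(t) + f(t) at t. Define e^λ(t) = ‖B(u(t))‖² + ‖v(t) + λ·u(t)‖². Then for all t ≥ 0, e^λ(t) ≤ e^λ(0) e^{−λt} + (2/λ) ∫₀ᵗ e^{−λ(t−s)} ‖f(s)‖² ds. -/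
/-!
Along a solution, `(d/dt) e^λ + λ e^λ ≤ (2/λ) ‖f‖²`: writing `w = v + λu`, the derivative of
`e^λ` is `-2λ‖Bu‖² + 2(λ - 2α)‖w‖² + 2λ(2α - λ)⟪u, w⟫ + 2⟪f, w⟫`, because the symmetry of `B`
cancels `⟪Bu, Bw⟫` against `⟪w, B²u⟫`. The cross term `⟪u, w⟫` is absorbed into `λ‖Bu‖² + α‖w‖²`
using `η₁‖u‖² ≤ ‖Bu‖²` and `4αλ ≤ η₁`, the forcing term into `(2/λ)‖f‖² + (λ/2)‖w‖²`, and
`λ ≤ α/2` makes the remaining coefficient of `‖w‖²` nonpositive. Grönwall's lemma for this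
linear differential inequality gives the estimate.
-/

open MeasureTheory intervalIntegral Set Real

theorem le_exp_mul_add_integral_of_deriv_add_mul_le {φ φ' g : ℝ → ℝ} {a b c : ℝ}
    (hab : a ≤ b) (hg : Continuous g) (hφ : ∀ s ∈ Icc a b, HasDerivAt φ (φ' s) s)
    (hle : ∀ s ∈ Ico a b, φ' s + c * φ s ≤ g s) :
    φ b ≤ φ a * exp (-c * (b - a)) + ∫ s in a..b, exp (-c * (b - s)) * g s := by
  have hexp : ∀ s, HasDerivAt (fun r ↦ exp (c * r)) (exp (c * s) * c) s := fun s ↦ by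
    simpa using ((hasDerivAt_id s).const_mul c).exp
  have hψ : ∀ s ∈ Icc a b,
      HasDerivAt (fun r ↦ exp (c * r) * φ r) (exp (c * s) * (φ' s + c * φ s)) s := fun s hs ↦
    ((hexp s).mul (hφ s hs)).congr_deriv (by ring)
  have hwg : Continuous fun r ↦ exp (c * r) * g r := by fun_prop
  have hbound : exp (c * b) * φ b ≤ exp (c * a) * φ a + ∫ r in a..b, exp (c * r) * g r :=
    image_le_of_deriv_right_le_deriv_boundary (f := fun r ↦ exp (c * r) * φ r)
      (B := fun s ↦ exp (c * a) * φ a + ∫ r in a..s, exp (c * r) * g r)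
      (fun s hs ↦ (hψ s hs).continuousAt.continuousWithinAt)
      (fun s hs ↦ (hψ s (Ico_subset_Icc_self hs)).hasDerivWithinAt) (by simp)
      (continuous_const.add
        (continuous_primitive (fun _ _ ↦ hwg.intervalIntegrable _ _) a)).continuousOn
      (fun s _ ↦ ((hwg.integral_hasStrictDerivAt a s).hasDerivAt.const_add _).hasDerivWithinAt)
      (fun s hs ↦ mul_le_mul_of_nonneg_left (hle s hs) (exp_pos _).le) (right_mem_Icc.2 hab)
  have hrescale : ∫ s in a..b, exp (-c * (b - s)) * g s
      = exp (-c * b) * ∫ r in a..b, exp (c * r) * g r := by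
    rw [← intervalIntegral.integral_const_mul]
    refine integral_congr fun s _ ↦ ?_
    rw [← mul_assoc, ← exp_add]
    ring_nf
  calc φ b = exp (-c * b) * (exp (c * b) * φ b) := by
        rw [← mul_assoc, ← exp_add]
        ring_nf
        simp
    _ ≤ exp (-c * b) * (exp (c * a) * φ a + ∫ r in a..b, exp (c * r) * g r) :=
        mul_le_mul_of_nonneg_left hbound (exp_pos _).le
    _ = φ a * exp (-c * (b - a)) + ∫ s in a..b, exp (-c * (b - s)) * g s := by
        rw [hrescale, mul_add, ← mul_assoc, ← exp_add]
        ring_nf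

theorem damping_cross_term_le {η α lam x y un p : ℝ} (hlam : 0 < lam) (hα : 2 * lam ≤ α)
    (hη : 4 * α * lam ≤ η) (hx : η * un ^ 2 ≤ x ^ 2) (hp : p ≤ un * y) :
    2 * lam * (2 * α - lam) * p ≤ lam * x ^ 2 + α * y ^ 2 := by
  have hα₀ : 0 < α := by linarith
  have hη₀ : 0 < η := by nlinarith
  have hk₀ : 0 ≤ lam * (2 * α - lam) := by nlinarith
  have hk₁ : lam * (2 * α - lam) ≤ 2 * α * lam := by nlinarith
  have hamgm : 4 * α * η * (un * y) ≤ η ^ 2 * un ^ 2 + 4 * α ^ 2 * y ^ 2 := by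
    nlinarith [sq_nonneg (η * un - 2 * α * y)]
  refine le_of_mul_le_mul_left ?_ (by positivity : 0 < 2 * α * η)
  calc 2 * α * η * (2 * lam * (2 * α - lam) * p) = lam * (2 * α - lam) * (4 * α * η * p) := by
        ring
    _ ≤ lam * (2 * α - lam) * (4 * α * η * (un * y)) := by gcongr
    _ ≤ lam * (2 * α - lam) * (η ^ 2 * un ^ 2 + 4 * α ^ 2 * y ^ 2) := by gcongr
    _ = lam * (2 * α - lam) * η * (η * un ^ 2) + 4 * α ^ 2 * (lam * (2 * α - lam)) * y ^ 2 := by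
        ring
    _ ≤ 2 * α * lam * η * x ^ 2 + 4 * α ^ 2 * (η / 2) * y ^ 2 := by gcongr; linarith
    _ = 2 * α * η * (lam * x ^ 2 + α * y ^ 2) := by ring

section PseudoEnergy

variable {E : Type*} [NormedAddCommGroup E] [InnerProductSpace ℝ E] (B : E →L[ℝ] E)

def pseudoEnergy (lam : ℝ) (U V : E) : ℝ := ‖B U‖ ^ 2 + ‖V + lam • U‖ ^ 2

theorem hasDerivAt_pseudoEnergy (lam : ℝ) {u v : ℝ → E} {u' v' : E} {t : ℝ}
    (hu : HasDerivAt u u' t) (hv : HasDerivAt v v' t) :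
    HasDerivAt (fun s ↦ pseudoEnergy B lam (u s) (v s))
      (2 * inner ℝ (B (u t)) (B u') + 2 * inner ℝ (v t + lam • u t) (v' + lam • u')) t :=
  (B.hasFDerivAt.comp_hasDerivAt t hu).norm_sq.add (hv.add (hu.const_smul lam)).norm_sq

variable {B}

theorem damped_pseudoEnergy_deriv_eq (hB : ∀ x y : E, inner ℝ (B x) y = inner ℝ x (B y))
    (α lam : ℝ) (U V F : E) :
    2 * inner ℝ (B U) (B V) + 2 * inner ℝ (V + lam • U) (-(B (B U)) - (2 * α) • V + F + lam • V)
      = -2 * lam * ‖B U‖ ^ 2 + 2 * (lam - 2 * α) * ‖V + lam • U‖ ^ 2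
        + 2 * lam * (2 * α - lam) * inner ℝ U (V + lam • U) + 2 * inner ℝ F (V + lam • U) := by
  simp only [← real_inner_self_eq_norm_sq, inner_add_left, inner_add_right, inner_sub_right,
    inner_neg_right, real_inner_smul_left, real_inner_smul_right]
  rw [← hB V, ← hB U, real_inner_comm U V, real_inner_comm F V, real_inner_comm F U,
    real_inner_comm (B U) (B V)]
  ring

theorem damped_pseudoEnergy_deriv_add_mul_le (hB : ∀ x y : E, inner ℝ (B x) y = inner ℝ x (B y))
    {η α lam : ℝ} (hBlow : ∀ x : E, η * ‖x‖ ^ 2 ≤ ‖B x‖ ^ 2) (hlam : 0 < lam)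
    (hα : 2 * lam ≤ α) (hη : 4 * α * lam ≤ η) (U V F : E) :
    2 * inner ℝ (B U) (B V) + 2 * inner ℝ (V + lam • U) (-(B (B U)) - (2 * α) • V + F + lam • V)
      + lam * pseudoEnergy B lam U V ≤ 2 / lam * ‖F‖ ^ 2 := by
  rw [damped_pseudoEnergy_deriv_eq hB, pseudoEnergy]
  set y := ‖V + lam • U‖
  have hcross := damping_cross_term_le hlam hα hη (hBlow U) (real_inner_le_norm U (V + lam • U))
  have hforcing : 2 * inner ℝ F (V + lam • U) ≤ 2 / lam * ‖F‖ ^ 2 + lam / 2 * y ^ 2 := by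
    have hsq : 0 ≤ (2 * ‖F‖ - lam * y) ^ 2 / (2 * lam) := by positivity
    have hexpand : (2 * ‖F‖ - lam * y) ^ 2 / (2 * lam)
        = 2 / lam * ‖F‖ ^ 2 + lam / 2 * y ^ 2 - 2 * (‖F‖ * y) := by
      field_simp
      ring
    linarith [real_inner_le_norm F (V + lam • U)]
  nlinarith [sq_nonneg y]

end PseudoEnergy

theorem pseudo_energy_exponential_estimate_general
    {E : Type*} [NormedAddCommGroup E] [InnerProductSpace ℝ E]
    (B : E →L[ℝ] E) (hB : ∀ x y : E, (inner ℝ (B x) y : ℝ) = inner ℝ x (B y))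
    (η₁ : ℝ) (hBlow : ∀ x : E, η₁ * ‖x‖ ^ 2 ≤ ‖B x‖ ^ 2)
    (α lam : ℝ) (hlam0 : 0 < lam)
    (hlam : lam ≤ min (α / 2) (η₁ / (4 * α)))
    (f : ℝ → E) (hf : Continuous f) (u v : ℝ → E)
    (hu : ∀ t : ℝ, 0 ≤ t → HasDerivAt u (v t) t)
    (hv : ∀ t : ℝ, 0 ≤ t → HasDerivAt v (-(B (B (u t))) - (2 * α) • v t + f t) t)
    (elam : ℝ → ℝ) (helam : elam = fun t => ‖B (u t)‖ ^ 2 + ‖v t + lam • u t‖ ^ 2) :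
    ∀ t : ℝ, 0 ≤ t →
      elam t ≤ elam 0 * Real.exp (-lam * t)
        + (2 / lam) * ∫ s in (0 : ℝ)..t, Real.exp (-lam * (t - s)) * ‖f s‖ ^ 2 := by
  intro t ht
  have hα : 2 * lam ≤ α := by linarith [hlam.trans (min_le_left _ _)]
  have hη : 4 * α * lam ≤ η₁ := by
    have := hlam.trans (min_le_right _ _)
    rwa [le_div_iff₀ (by linarith), mul_comm] at this
  subst helam
  have hestimate := le_exp_mul_add_integral_of_deriv_add_mul_le
    (φ := fun s ↦ pseudoEnergy B lam (u s) (v s)) (g := fun s ↦ 2 / lam * ‖f s‖ ^ 2) ht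
    (by fun_prop)
    (fun s hs ↦ hasDerivAt_pseudoEnergy B lam (hu s hs.1) (hv s hs.1))
    (fun s _ ↦ damped_pseudoEnergy_deriv_add_mul_le hB hBlow hlam0 hα hη _ _ _)
  simpa only [pseudoEnergy, sub_zero, mul_left_comm _ (2 / lam),
    intervalIntegral.integral_const_mul] using hestimate

/-- The deterministic (noise-free) version of Lemma 3.2 (exponential estimate) for the
pseudo energy function `e^λ(u;v) = ‖Bu‖² + ‖v + λu‖²`. -/
theorem pseudo_energy_exponential_estimate
    {E : Type*} [NormedAddCommGroup E] [InnerProductSpace ℝ E]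
    (B : E →L[ℝ] E) (hB : ∀ x y : E, (inner ℝ (B x) y : ℝ) = inner ℝ x (B y))
    (η₁ : ℝ) (hη : 0 < η₁) (hBlow : ∀ x : E, η₁ * ‖x‖ ^ 2 ≤ ‖B x‖ ^ 2)
    (α lam : ℝ) (hα : 0 < α) (hlam0 : 0 < lam)
    (hlam : lam ≤ min (α / 2) (η₁ / (4 * α)))
    (f : ℝ → E) (hf : Continuous f) (u v : ℝ → E)
    (hu : ∀ t : ℝ, 0 ≤ t → HasDerivAt u (v t) t)
    (hv : ∀ t : ℝ, 0 ≤ t → HasDerivAt v (-(B (B (u t))) - (2 * α) • v t + f t) t)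
    (elam : ℝ → ℝ) (helam : elam = fun t => ‖B (u t)‖ ^ 2 + ‖v t + lam • u t‖ ^ 2) :
    ∀ t : ℝ, 0 ≤ t →
      elam t ≤ elam 0 * Real.exp (-lam * t)
        + (2 / lam) * ∫ s in (0 : ℝ)..t, Real.exp (-lam * (t - s)) * ‖f s‖ ^ 2 :=
  pseudo_energy_exponential_estimate_general B hB η₁ hBlow α lam hlam0 hlam f hf u v hu hv elam
    helam
end
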